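/- Error-disturbance relation (Theorem 1): Let A, B, M_out, B_out be self-adjoint operators on a complex Hilbert space with [M_out, B_out] = 0, Ψ a unit vector, Ψ⊥ a unit vector orthogonal to Ψ, N = M_out − A, D = B_out − B, ε² = ⟨Ψ, N²Ψ⟩, η² = ⟨Ψ, D²Ψ⟩. Then ε² + η² ≥ ±i⟨Ψ,[A,B]Ψ⟩ ∓ i⟨Ψ,[M_out,B]Ψ⟩ ∓ i⟨Ψ,[A,B_out]Ψ⟩ + |⟨Ψ,(N ± iD)Ψ⊥⟩|². -/

import Mathlib

open Complex

local notation "⟪" x ", " y "⟫" => @inner ℂ _ _ x y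

/-!
Write `u = N Ψ`, `v = D Ψ` and `w = u - (± i) • v`. Self-adjointness gives
`ε² + η² = ‖w‖² ± i ⟨Ψ, [N, D] Ψ⟩` and `⟨Ψ, (N ± i D) Ψ⊥⟩ = ⟨w, Ψ⊥⟩`, which Cauchy–Schwarz bounds
by `‖w‖`. Since `M_out` and `B_out` commute, `[N, D] = [A, B] - [M_out, B] - [A, B_out]`.
-/

theorem commutator_sub_sub_of_commute {R : Type*} [Ring R] {a b m b' : R} (h : Commute m b') :
    (m - a) * (b' - b) - (b' - b) * (m - a)
      = (a * b - b * a) - (m * b - b * m) - (a * b' - b' * a) := by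
  simp only [sub_mul, mul_sub, h.eq]
  abel

theorem norm_sub_ofReal_mul_I_smul_sq {E : Type*} [NormedAddCommGroup E] [InnerProductSpace ℂ E]
    (u v : E) (s : ℝ) :
    ‖u - ((s : ℂ) * I) • v‖ ^ 2 = ‖u‖ ^ 2 + 2 * s * (⟪u, v⟫).im + s ^ 2 * ‖v‖ ^ 2 := by
  rw [@norm_sub_sq ℂ, norm_smul, inner_smul_right, RCLike.re_to_complex]
  simp only [mul_re, ofReal_re, I_re, mul_zero, ofReal_im, I_im, mul_one, sub_self, zero_mul,
    mul_im, add_zero, zero_sub, mul_neg, sub_neg_eq_add, Complex.norm_mul, norm_real,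
    Real.norm_eq_abs, norm_I]
  rw [mul_pow, sq_abs]
  ring

namespace LinearMap.IsSymmetric

variable {E : Type*} [NormedAddCommGroup E] [InnerProductSpace ℂ E] {S T : E →ₗ[ℂ] E}

theorem re_inner_map_map_self (hT : T.IsSymmetric) (x : E) : (⟪x, T (T x)⟫).re = ‖T x‖ ^ 2 := by
  rw [← hT, inner_self_eq_norm_sq_to_K (𝕜 := ℂ)]
  norm_cast

theorem re_I_mul_inner_commutator (hS : S.IsSymmetric) (hT : T.IsSymmetric) (x : E) :
    (I * ⟪x, S (T x) - T (S x)⟫).re = -2 * (⟪S x, T x⟫).im := by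
  rw [inner_sub_right, ← hS x (T x), ← hT x (S x), ← inner_conj_symm (T x) (S x)]
  simp only [mul_re, sub_re, sub_im, conj_re, conj_im, I_re, I_im]
  ring

theorem inner_add_ofReal_mul_I_smul (hS : S.IsSymmetric) (hT : T.IsSymmetric) (s : ℝ) (x y : E) :
    ⟪x, S y + ((s : ℂ) * I) • T y⟫ = ⟪S x - ((s : ℂ) * I) • T x, y⟫ := by
  rw [inner_add_right, inner_smul_right, ← hS, ← hT, inner_sub_left, inner_smul_left]
  simp only [map_mul, conj_ofReal, conj_I]
  ring

/-- The sum uncertainty relation of Maccone–Pati, with second moments in place of variances. -/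
theorem sq_norm_inner_add_I_smul_le (hS : S.IsSymmetric) (hT : T.IsSymmetric) (s : ℝ)
    (x y : E) (hy : ‖y‖ ≤ 1) :
    ‖⟪x, S y + ((s : ℂ) * I) • T y⟫‖ ^ 2
      ≤ ‖S x‖ ^ 2 + s ^ 2 * ‖T x‖ ^ 2 - s * (I * ⟪x, S (T x) - T (S x)⟫).re := by
  have hCS : ‖⟪S x - ((s : ℂ) * I) • T x, y⟫‖ ≤ ‖S x - ((s : ℂ) * I) • T x‖ := by
    exact (norm_inner_le_norm (𝕜 := ℂ) _ y).trans (mul_le_of_le_one_right (norm_nonneg _) hy)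
  rw [inner_add_ofReal_mul_I_smul hS hT, re_I_mul_inner_commutator hS hT]
  calc ‖⟪S x - ((s : ℂ) * I) • T x, y⟫‖ ^ 2 ≤ ‖S x - ((s : ℂ) * I) • T x‖ ^ 2 := by gcongr
    _ = _ := by rw [norm_sub_ofReal_mul_I_smul_sq]; ring

end LinearMap.IsSymmetric

theorem error_disturbance_theorem1_general
    {E : Type*} [NormedAddCommGroup E] [InnerProductSpace ℂ E]
    (A B Mo Bo : E →ₗ[ℂ] E)
    (hA : ∀ x y : E, ⟪A x, y⟫ = ⟪x, A y⟫)
    (hB : ∀ x y : E, ⟪B x, y⟫ = ⟪x, B y⟫)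
    (hMo : ∀ x y : E, ⟪Mo x, y⟫ = ⟪x, Mo y⟫)
    (hBo : ∀ x y : E, ⟪Bo x, y⟫ = ⟪x, Bo y⟫)
    (hcomm : Mo ∘ₗ Bo = Bo ∘ₗ Mo)
    (N D : E →ₗ[ℂ] E) (hN : N = Mo - A) (hD : D = Bo - B)
    (Ψ Ψp : E) (hΨp : ‖Ψp‖ = 1)
    (s : ℝ) (hs : s = 1 ∨ s = -1) :
    (⟪Ψ, N (N Ψ)⟫).re + (⟪Ψ, D (D Ψ)⟫).re ≥
      s * (Complex.I * ⟪Ψ, A (B Ψ) - B (A Ψ)⟫).re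
        - s * (Complex.I * ⟪Ψ, Mo (B Ψ) - B (Mo Ψ)⟫).re
        - s * (Complex.I * ⟪Ψ, A (Bo Ψ) - Bo (A Ψ)⟫).re
        + ‖⟪Ψ, N Ψp + ((s : ℂ) * Complex.I) • D Ψp⟫‖ ^ 2 := by
  have hNs : N.IsSymmetric := hN ▸ LinearMap.IsSymmetric.sub hMo hA
  have hDs : D.IsSymmetric := hD ▸ LinearMap.IsSymmetric.sub hBo hB
  have hs2 : s ^ 2 = 1 := by rcases hs with rfl | rfl <;> norm_num
  have hdecomp : N (D Ψ) - D (N Ψ)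
      = A (B Ψ) - B (A Ψ) - (Mo (B Ψ) - B (Mo Ψ)) - (A (Bo Ψ) - Bo (A Ψ)) := by
    simpa [hN, hD] using
      LinearMap.congr_fun (commutator_sub_sub_of_commute (a := A) (b := B) hcomm) Ψ
  have key := hNs.sq_norm_inner_add_I_smul_le hDs s Ψ Ψp hΨp.le
  rw [hdecomp, inner_sub_right, inner_sub_right] at key
  simp only [mul_sub, sub_re, hs2, one_mul] at key
  rw [hNs.re_inner_map_map_self, hDs.re_inner_map_map_self]
  linarith

/-- Theorem 1 (new error–disturbance relation):
ε² + η² ≥ ±i⟨Ψ,[A,B]Ψ⟩ ∓ i⟨Ψ,[M_out,B]Ψ⟩ ∓ i⟨Ψ,[A,B_out]Ψ⟩ + |⟨Ψ,(N ± iD)Ψ⊥⟩|². -/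
theorem error_disturbance_theorem1
    {E : Type*} [NormedAddCommGroup E] [InnerProductSpace ℂ E]
    (A B Mo Bo : E →ₗ[ℂ] E)
    (hA : ∀ x y : E, ⟪A x, y⟫ = ⟪x, A y⟫)
    (hB : ∀ x y : E, ⟪B x, y⟫ = ⟪x, B y⟫)
    (hMo : ∀ x y : E, ⟪Mo x, y⟫ = ⟪x, Mo y⟫)
    (hBo : ∀ x y : E, ⟪Bo x, y⟫ = ⟪x, Bo y⟫)
    (hcomm : Mo ∘ₗ Bo = Bo ∘ₗ Mo)
    (N D : E →ₗ[ℂ] E) (hN : N = Mo - A) (hD : D = Bo - B)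
    (Ψ Ψp : E) (hΨ : ‖Ψ‖ = 1) (hΨp : ‖Ψp‖ = 1) (horth : ⟪Ψ, Ψp⟫ = 0)
    (s : ℝ) (hs : s = 1 ∨ s = -1) :
    (⟪Ψ, N (N Ψ)⟫).re + (⟪Ψ, D (D Ψ)⟫).re ≥
      s * (Complex.I * ⟪Ψ, A (B Ψ) - B (A Ψ)⟫).re
        - s * (Complex.I * ⟪Ψ, Mo (B Ψ) - B (Mo Ψ)⟫).re
        - s * (Complex.I * ⟪Ψ, A (Bo Ψ) - Bo (A Ψ)⟫).re
        + ‖⟪Ψ, N Ψp + ((s : ℂ) * Complex.I) • D Ψp⟫‖ ^ 2 :=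
  error_disturbance_theorem1_general A B Mo Bo hA hB hMo hBo hcomm N D hN hD Ψ Ψp hΨp s hs
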